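/- arXiv:0910.1538 — 2 statements merged into one kernel-verified Lean document; each statement's English description precedes it below -/
import Mathlib

section
/- Let g be a finite-dimensional real Lie algebra and D ⊆ g ⊕ g* a Lagrangian subspace satisfying: for all (x,ξ), (y,η), (z,ζ) ∈ D, ζ([x,y]) + ξ([y,z]) + η([z,x]) = 0. Then g₀ = {x ∈ g | (x,0) ∈ D} and g₁ = {x ∈ g | ∃ξ, (x,ξ) ∈ D} are Lie subalgebras of g. -/
/-!
STATEMENT 1: If a Lagrangian subspace `D ⊆ g ⊕ g*` satisfies the integrability condition
`ζ([x,y]) + ξ([y,z]) + η([z,x]) = 0` for all `(x,ξ), (y,η), (z,ζ) ∈ D`, then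
`g₀ = {x | (x,0) ∈ D}` and `g₁ = {x | ∃ ξ, (x,ξ) ∈ D}` are Lie subalgebras of `g`.
-/

theorem dirac_subspace_integrable_subalgebras
    (g : Type*) [LieRing g] [LieAlgebra ℝ g] [FiniteDimensional ℝ g]
    (D : Submodule ℝ (g × Module.Dual ℝ g))
    (hD : ∀ v : g × Module.Dual ℝ g,
      v ∈ D ↔ ∀ w ∈ D, v.2 w.1 + w.2 v.1 = 0)
    (hint : ∀ (x y z : g) (ξ η ζ : Module.Dual ℝ g),
      (x, ξ) ∈ D → (y, η) ∈ D → (z, ζ) ∈ D →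
        ζ ⁅x, y⁆ + ξ ⁅y, z⁆ + η ⁅z, x⁆ = 0) :
    (∀ x y : g, (x, 0) ∈ D → (y, 0) ∈ D → (⁅x, y⁆, 0) ∈ D) ∧
    (∀ x y : g, (∃ ξ : Module.Dual ℝ g, (x, ξ) ∈ D) →
      (∃ η : Module.Dual ℝ g, (y, η) ∈ D) →
      ∃ ζ : Module.Dual ℝ g, (⁅x, y⁆, ζ) ∈ D) := by
  constructor
  · intro x y hx hy
    rw [hD]
    intro w hw
    have h := hint x y w.1 0 0 w.2 hx hy (by simpa using hw)
    simpa using h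
  · rintro x y ⟨ξ, hx⟩ ⟨η, hy⟩
    -- Any dual vector paired with 0 in D kills ⁅x, y⁆.
    have hzero : ∀ θ : Module.Dual ℝ g, ((0 : g), θ) ∈ D → θ ⁅x, y⁆ = 0 := by
      intro θ hθ
      have h := hint x y 0 ξ η θ hx hy hθ
      simpa using h
    -- The projection of D to g.
    set W : Submodule ℝ g := D.map (LinearMap.fst ℝ g (Module.Dual ℝ g)) with hW
    have hmem : ∀ w : W, ∃ θ : Module.Dual ℝ g, ((w : g), θ) ∈ D := by
      rintro ⟨w, hw⟩
      rcases hw with ⟨⟨w', θ⟩, hw', rfl⟩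
      exact ⟨θ, hw'⟩
    -- the chosen dual partner for each w ∈ W
    set c : ∀ w : W, Module.Dual ℝ g := fun w => Classical.choose (hmem w) with hc
    have hcD : ∀ w : W, ((w : g), c w) ∈ D := fun w => Classical.choose_spec (hmem w)
    -- key well-definedness: any two dual partners of the same w agree on ⁅x,y⁆
    have hwd : ∀ (w : g) (θ θ' : Module.Dual ℝ g),
        (w, θ) ∈ D → (w, θ') ∈ D → θ ⁅x, y⁆ = θ' ⁅x, y⁆ := by
      intro w θ θ' h1 h2
      have h3 : ((0 : g), θ - θ') ∈ D := by
        have := D.sub_mem h1 h2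
        simpa using this
      have := hzero _ h3
      simp only [LinearMap.sub_apply] at this
      linarith
    -- f : W →ₗ[ℝ] ℝ, w ↦ -(c w) ⁅x,y⁆
    set f : W →ₗ[ℝ] ℝ :=
      { toFun := fun w => -(c w) ⁅x, y⁆
        map_add' := by
          intro w₁ w₂
          have hsum : ((↑(w₁ + w₂) : g), c w₁ + c w₂) ∈ D := by
            have := D.add_mem (hcD w₁) (hcD w₂)
            simpa using this
          have := hwd _ _ _ (hcD (w₁ + w₂)) hsum
          simp only [LinearMap.add_apply] at this
          rw [this]; ring
        map_smul' := by
          intro r w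
          have hsm : ((↑(r • w) : g), r • c w) ∈ D := by
            have := D.smul_mem r (hcD w)
            simpa using this
          have := hwd _ _ _ (hcD (r • w)) hsm
          simp only [LinearMap.smul_apply] at this
          rw [this]; simp [smul_eq_mul] } with hf
    obtain ⟨ζ, hζ⟩ := LinearMap.exists_extend f
    refine ⟨ζ, ?_⟩
    rw [hD]
    intro w hw
    have hwW : w.1 ∈ W := ⟨w, hw, rfl⟩
    have hζw : ζ w.1 = -(c ⟨w.1, hwW⟩) ⁅x, y⁆ := by
      have := congrArg (fun φ => φ (⟨w.1, hwW⟩ : W)) hζ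
      simpa [hf] using this
    have hagree : (c ⟨w.1, hwW⟩) ⁅x, y⁆ = w.2 ⁅x, y⁆ :=
      hwd _ _ _ (hcD ⟨w.1, hwW⟩) (by simpa using hw)
    simp only [hζw, hagree]
    ring
end

section
/- Let (G, D_G) be a Dirac Lie group, i.e. D_G is a multiplicative Dirac structure, meaning D_G is a subgroupoid of the Pontryagin groupoid TG ⊕ T*G ⇉ g*. Then for every g ∈ G, the characteristic distribution G₀(g) = {v ∈ T_gG | (v,0) ∈ D_G(g)} satisfies G₀(g) = T_eL_g g₀ = T_eR_g g₀, where g₀ = G₀(e); in particular G₀ is both left- and right-invariant and has constant rank. -/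
open scoped Manifold
noncomputable section
namespace DiracPaper

section LagrGen
variable {V : Type*} [NormedAddCommGroup V] [NormedSpace ℝ V]

/-- A subspace of `V ⊕ V*` is Lagrangian if it coincides with its orthogonal for the
canonical pairing `⟨(x,ξ),(y,η)⟩ = ξ(y) + η(x)`. -/
def IsLagr (D : Submodule ℝ (V × (V →L[ℝ] ℝ))) : Prop :=
  ∀ p : V × (V →L[ℝ] ℝ), p ∈ D ↔ ∀ q ∈ D, p.2 q.1 + q.2 p.1 = 0

end LagrGen

variable {E : Type*} [NormedAddCommGroup E] [NormedSpace ℝ E]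
variable {G : Type*} [TopologicalSpace G] [ChartedSpace E G] [Group G] [LieGroup 𝓘(ℝ, E) (⊤ : ℕ∞) G]

/-- The differential of left translation `L_g` at the point `h` (all tangent spaces being
identified with the model space `E`). -/
def dL (g h : G) : E →L[ℝ] E := mfderiv 𝓘(ℝ, E) 𝓘(ℝ, E) (fun x => g * x) h

/-- The differential of right translation `R_h` at the point `g`. -/
def dR (h g : G) : E →L[ℝ] E := mfderiv 𝓘(ℝ, E) 𝓘(ℝ, E) (fun x => x * h) g

/-- The differential at the neutral element of a real valued function on `G`. -/
def d1 (f : G → ℝ) : E →L[ℝ] ℝ := mfderiv 𝓘(ℝ, E) 𝓘(ℝ, ℝ) f (1 : G)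

/-- The left invariant vector field associated to `x ∈ 𝔤 = T_e G`. -/
def xL (x : E) (g : G) : E := dL g 1 x

/-- The left invariant one-form associated to `ξ ∈ 𝔤*`: `ξ^L(g) = (T_g L_{g⁻¹})^* ξ`. -/
def leftForm (ξ : E →L[ℝ] ℝ) (g : G) : E →L[ℝ] ℝ := ξ.comp (dL g⁻¹ g)

/-- The right invariant one-form associated to `ξ ∈ 𝔤*`: `ξ^R(g) = (T_g R_{g⁻¹})^* ξ`. -/
def rightForm (ξ : E →L[ℝ] ℝ) (g : G) : E →L[ℝ] ℝ := ξ.comp (dR g⁻¹ g)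

/-- The adjoint action of `G` on `𝔤 = T_e G`. -/
def Ad (g : G) : E →L[ℝ] E := mfderiv 𝓘(ℝ, E) 𝓘(ℝ, E) (fun x => g * x * g⁻¹) 1

variable (G) in
/-- The adjoint action of `𝔤` on itself, obtained by differentiating `Ad` at `e`;
`adCLM G x y = ⁅x, y⁆`. -/
def adCLM : E →L[ℝ] E →L[ℝ] E :=
  mfderiv 𝓘(ℝ, E) 𝓘(ℝ, E →L[ℝ] E) (Ad : G → (E →L[ℝ] E)) 1

variable (G) in
/-- The Lie bracket on `𝔤 = T_e G`. -/
def bra (x y : E) : E := adCLM G x y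

variable (G) in
/-- The coadjoint action: `(coadW G x ξ) y = ξ ⁅y, x⁆`, i.e. `ad_x^* ξ`. -/
def coadW (x : E) (ξ : E →L[ℝ] ℝ) : E →L[ℝ] ℝ := ξ.comp ((adCLM G).flip x)


/-- Multiplicativity of a field of subspaces `D(g) ⊆ T_g G ⊕ T_g^* G`: group multiplication
is a forward Dirac map. -/
def MultDirac (D : G → Submodule ℝ (E × (E →L[ℝ] ℝ))) : Prop :=
  ∀ g h : G, ∀ p ∈ D (g * h), ∃ w u : E, ∃ β γ : E →L[ℝ] ℝ,
    (w, β) ∈ D g ∧ (u, γ) ∈ D h ∧ dR h g w + dL g h u = p.1 ∧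
    β = p.2.comp (dR h g) ∧ γ = p.2.comp (dL g h)

/-- `𝔤₀ = G₀(e)`, the kernel of the Dirac structure at the neutral element. -/
def g0set (D : G → Submodule ℝ (E × (E →L[ℝ] ℝ))) : Set E := {x | (x, 0) ∈ D 1}

/-- `𝔭₁ = P₁(e)`, the characteristic codistribution at the neutral element. -/
def p1set (D : G → Submodule ℝ (E × (E →L[ℝ] ℝ))) : Set (E →L[ℝ] ℝ) :=
  {ξ | ∃ x, (x, ξ) ∈ D 1}

/-- A smooth vector field `X = X_ξ` such that `(X_ξ, ξ^L)` is a section of `D`. -/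
def SmoothSec (D : G → Submodule ℝ (E × (E →L[ℝ] ℝ))) (ξ : E →L[ℝ] ℝ) (X : G → E) : Prop :=
  ContMDiff 𝓘(ℝ, E) 𝓘(ℝ, E) (⊤ : ℕ∞) X ∧ ∀ g, (X g, leftForm ξ g) ∈ D g

/-- `p1br η X_ξ = [ξ, η] = d_e (η^L (X_ξ))`, the bracket of `ξ, η ∈ 𝔭₁` computed with a
choice of vector field `X_ξ`. -/
def p1br (η : E →L[ℝ] ℝ) (X : G → E) : E →L[ℝ] ℝ := d1 (fun g => leftForm η g (X g))

/-- `z ∈ 𝔤` represents `ad_η^* x ∈ 𝔤/𝔤₀ = 𝔭₁^*`, which is defined by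
`(ad_η^* x)(θ) = [θ, η](x)`. -/
def RepAdStar (D : G → Submodule ℝ (E × (E →L[ℝ] ℝ))) (η : E →L[ℝ] ℝ) (x z : E) : Prop :=
  ∀ θ ∈ p1set D, ∀ Xθ : G → E, SmoothSec D θ Xθ → θ z = p1br η Xθ x

/-- A one-parameter subgroup `c` of `G` with derivative `x` at `0` (playing the role of
`t ↦ exp (t x)`). -/
def OneParam (c : ℝ → G) (x : E) : Prop :=
  ContMDiff 𝓘(ℝ, ℝ) 𝓘(ℝ, E) (⊤ : ℕ∞) c ∧ c 0 = 1 ∧ (∀ s t : ℝ, c (s + t) = c s * c t) ∧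
    (id (mfderiv 𝓘(ℝ, ℝ) 𝓘(ℝ, E) c 0 (1 : ℝ)) : E) = x

section Courant

variable {F : Type*} [NormedAddCommGroup F] [NormedSpace ℝ F]
variable {M : Type*} [TopologicalSpace M] [ChartedSpace F M]

/-- The Lie bracket of two vector fields, computed in the trivialization of the tangent
bundle given by the identification `TangentSpace 𝓘(ℝ,F) m = F`. -/
def vLie (X Y : M → F) (m : M) : F :=
  (id (mfderiv 𝓘(ℝ, F) 𝓘(ℝ, F) Y m (X m)) : F) -
    (id (mfderiv 𝓘(ℝ, F) 𝓘(ℝ, F) X m (Y m)) : F)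

/-- The Lie derivative `£_X β` of a one-form `β` along a vector field `X`, in the same
trivialization. -/
def lieDform (X : M → F) (β : M → (F →L[ℝ] ℝ)) (m : M) : F →L[ℝ] ℝ :=
  (id (mfderiv 𝓘(ℝ, F) 𝓘(ℝ, F →L[ℝ] ℝ) β m (X m)) : F →L[ℝ] ℝ) +
    (β m).comp (id (mfderiv 𝓘(ℝ, F) 𝓘(ℝ, F) X m) : F →L[ℝ] F)

/-- The contraction `i_Y dα`, in the same trivialization. -/
def iotaDform (Y : M → F) (α : M → (F →L[ℝ] ℝ)) (m : M) : F →L[ℝ] ℝ :=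
  (id (mfderiv 𝓘(ℝ, F) 𝓘(ℝ, F →L[ℝ] ℝ) α m (Y m)) : F →L[ℝ] ℝ) -
    (id (mfderiv 𝓘(ℝ, F) 𝓘(ℝ, F →L[ℝ] ℝ) α m) : F →L[ℝ] (F →L[ℝ] ℝ)).flip (Y m)

/-- Integrability of a Dirac structure: closure of the space of smooth sections under the
Courant–Dorfman bracket `[(X,α),(Y,β)] = ([X,Y], £_X β − i_Y dα)`. -/
def CourantClosed (D : M → Submodule ℝ (F × (F →L[ℝ] ℝ))) : Prop :=
  ∀ (X Y : M → F) (α β : M → (F →L[ℝ] ℝ)),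
    ContMDiff 𝓘(ℝ, F) 𝓘(ℝ, F) (⊤ : ℕ∞) X → ContMDiff 𝓘(ℝ, F) 𝓘(ℝ, F →L[ℝ] ℝ) (⊤ : ℕ∞) α →
    ContMDiff 𝓘(ℝ, F) 𝓘(ℝ, F) (⊤ : ℕ∞) Y → ContMDiff 𝓘(ℝ, F) 𝓘(ℝ, F →L[ℝ] ℝ) (⊤ : ℕ∞) β →
    (∀ m, (X m, α m) ∈ D m) → (∀ m, (Y m, β m) ∈ D m) →
    ∀ m, (vLie X Y m, lieDform X β m - iotaDform Y α m) ∈ D m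

end Courant

/-!
For a Lagrangian `D`, a vector `v` lies in the characteristic space `{v | (v, 0) ∈ D}` exactly when
every element of `D` annihilates it. If `(v, 0) ∈ D(b)` and `p ∈ D(ab)`, multiplicativity splits
`p = (w, β) ⋆ (u, γ)` with `(u, γ) ∈ D(b)` and `γ = p.2 ∘ T_b L_a`, so `p.2 (T_b L_a v) = γ v = 0`.
Hence left translations `T_b L_a` map `G₀(b)` into `G₀(ab)`, and symmetrically for right translations.
Since `T_g L_{g⁻¹}` and `T_e L_g` are mutually inverse, `T_e L_g` maps `𝔤₀` onto `G₀(g)`.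
-/

lemma IsLagr.prod_zero_mem_iff {V : Type*} [NormedAddCommGroup V] [NormedSpace ℝ V]
    {D : Submodule ℝ (V × (V →L[ℝ] ℝ))} (hD : IsLagr D) (v : V) :
    (v, 0) ∈ D ↔ ∀ q ∈ D, q.2 v = 0 := by
  simp only [hD (v, 0), zero_apply, zero_add]

omit [LieGroup 𝓘(ℝ, E) (⊤ : ℕ∞) G] in
lemma dL_one (k : G) : dL (1 : G) k = ContinuousLinearMap.id ℝ E := by
  rw [dL, show (fun x : G => 1 * x) = id from funext one_mul, mfderiv_id]
  rfl

omit [LieGroup 𝓘(ℝ, E) (⊤ : ℕ∞) G] in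
lemma dR_one (g : G) : dR (1 : G) g = ContinuousLinearMap.id ℝ E := by
  rw [dR, show (fun x : G => x * 1) = id from funext mul_one, mfderiv_id]
  rfl

lemma dL_comp_dL (g h k : G) : (dL (E := E) g (h * k)).comp (dL h k) = dL (g * h) k := by
  have hcomp := mfderiv_comp (I := 𝓘(ℝ, E)) (I' := 𝓘(ℝ, E)) (I'' := 𝓘(ℝ, E)) k
    (mdifferentiableAt_mul_left (a := g)) (mdifferentiableAt_mul_left (a := h))
  have hmul : (g * ·) ∘ (h * ·) = ((g * h) * ·) := by
    funext x; simp [mul_assoc]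
  rw [hmul] at hcomp
  exact hcomp.symm

lemma dR_comp_dR (g h k : G) : (dR (E := E) k (g * h)).comp (dR h g) = dR (h * k) g := by
  have hcomp := mfderiv_comp (I := 𝓘(ℝ, E)) (I' := 𝓘(ℝ, E)) (I'' := 𝓘(ℝ, E)) g
    (mdifferentiableAt_mul_right (a := k)) (mdifferentiableAt_mul_right (a := h))
  have hmul : (· * k) ∘ (· * h) = (· * (h * k)) := by
    funext x; simp [mul_assoc]
  rw [hmul] at hcomp
  exact hcomp.symm

lemma dL_dL_inv_apply (g : G) (v : E) : dL g 1 (dL g⁻¹ g v) = v := by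
  have h := dL_comp_dL (E := E) g g⁻¹ g
  rw [inv_mul_cancel, mul_inv_cancel, dL_one] at h
  exact congr($h v)

lemma dR_dR_inv_apply (g : G) (v : E) : dR g 1 (dR g⁻¹ g v) = v := by
  have h := dR_comp_dR (E := E) g g⁻¹ g
  rw [inv_mul_cancel, mul_inv_cancel, dR_one] at h
  exact congr($h v)

def charDist (D : G → Submodule ℝ (E × (E →L[ℝ] ℝ))) (g : G) : Set E :=
  {v | (v, 0) ∈ D g}

section MultiplicativeDirac

variable {D : G → Submodule ℝ (E × (E →L[ℝ] ℝ))} (hLag : ∀ g : G, IsLagr (D g))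
  (hMult : MultDirac D)
include hLag hMult

omit [LieGroup 𝓘(ℝ, E) (⊤ : ℕ∞) G] in
lemma mapsTo_dL_charDist (a b : G) : Set.MapsTo (dL a b) (charDist D b) (charDist D (a * b)) := by
  intro v hv
  refine ((hLag (a * b)).prod_zero_mem_iff _).mpr fun q hq => ?_
  obtain ⟨w, u, β, γ, -, hu, -, -, rfl⟩ := hMult a b q hq
  exact ((hLag b).prod_zero_mem_iff v).mp hv _ hu

omit [LieGroup 𝓘(ℝ, E) (⊤ : ℕ∞) G] in
lemma mapsTo_dR_charDist (a b : G) : Set.MapsTo (dR b a) (charDist D a) (charDist D (a * b)) := by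
  intro v hv
  refine ((hLag (a * b)).prod_zero_mem_iff _).mpr fun q hq => ?_
  obtain ⟨w, u, β, γ, hw, -, -, rfl, -⟩ := hMult a b q hq
  exact ((hLag a).prod_zero_mem_iff v).mp hv _ hw

lemma charDist_eq_image_dL (g : G) : charDist D g = dL g 1 '' charDist D 1 := by
  have hmaps := mapsTo_dL_charDist hLag hMult g 1
  have hback := mapsTo_dL_charDist hLag hMult g⁻¹ g
  rw [mul_one] at hmaps
  rw [inv_mul_cancel] at hback
  have hinv : Set.RightInvOn (dL g⁻¹ g) (dL g 1) (charDist D g) :=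
    fun v _ => dL_dL_inv_apply g v
  exact ((hinv.surjOn hback).image_eq_of_mapsTo hmaps).symm

lemma charDist_eq_image_dR (g : G) : charDist D g = dR g 1 '' charDist D 1 := by
  have hmaps := mapsTo_dR_charDist hLag hMult 1 g
  have hback := mapsTo_dR_charDist hLag hMult g g⁻¹
  rw [one_mul] at hmaps
  rw [mul_inv_cancel] at hback
  have hinv : Set.RightInvOn (dR g⁻¹ g) (dR g 1) (charDist D g) :=
    fun v _ => dR_dR_inv_apply g v
  exact ((hinv.surjOn hback).image_eq_of_mapsTo hmaps).symm

end MultiplicativeDirac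

theorem dirac_lie_group_characteristic_distribution
    (D : G → Submodule ℝ (E × (E →L[ℝ] ℝ)))
    (hLag : ∀ g : G, IsLagr (D g)) (hMult : MultDirac D) :
    ∀ g : G,
      {v : E | (v, (0 : E →L[ℝ] ℝ)) ∈ D g} = ⇑(dL g (1 : G)) '' g0set D ∧
      {v : E | (v, (0 : E →L[ℝ] ℝ)) ∈ D g} = ⇑(dR g (1 : G)) '' g0set D :=
  fun g => ⟨charDist_eq_image_dL hLag hMult g, charDist_eq_image_dR hLag hMult g⟩

end DiracPaper
end
end
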